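/- For every u ∈ (0,∞)^d and v ∈ (0,∞), one has ∫_{S_d} (1 − x_1 − … − x_d)^{v−1} ∏_{i=1}^d x_i^{u_i−1} dx = Γ(v) ∏_{i=1}^d Γ(u_i) / Γ(u_1 + … + u_d + v); equivalently, the Dirichlet(u,v) density K_{u,v} integrates to 1 over S_d. -/

import Mathlib

open MeasureTheory ProbabilityTheory Real Filter Finset Matrix

noncomputable section

/-- The unit simplex `S_d = {x ∈ [0,1]^d : x_1 + … + x_d ≤ 1}`. -/
def Sd (d : ℕ) : Set (Fin d → ℝ) :=
  {x | (∀ i, 0 ≤ x i ∧ x i ≤ 1) ∧ ∑ i, x i ≤ 1}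

/-- The interior of the unit simplex. -/
def SdInt (d : ℕ) : Set (Fin d → ℝ) :=
  {x | (∀ i, 0 < x i) ∧ ∑ i, x i < 1}

/-- The Dirichlet(u, v) density on the simplex. -/
def Kdir {d : ℕ} (u : Fin d → ℝ) (v : ℝ) (x : Fin d → ℝ) : ℝ :=
  (Gamma ((∑ i, u i) + v) / (Gamma v * ∏ i, Gamma (u i))) *
    (1 - ∑ i, x i) ^ (v - 1) * ∏ i, (x i) ^ (u i - 1)

/-- The locally adaptive Dirichlet kernel `κ_{s,b}`. -/
def kappa {d : ℕ} (s : Fin d → ℝ) (b : ℝ) : (Fin d → ℝ) → ℝ :=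
  Kdir (fun i => s i / b + 1) ((1 - ∑ i, s i) / b + 1)

/-- `A_b(s) = ∫_{S_d} κ_{s,b}(x)² dx`. -/
def Adir {d : ℕ} (b : ℝ) (s : Fin d → ℝ) : ℝ :=
  ∫ x in Sd d, (kappa s b x) ^ 2

/-- Second partial derivative `∂² m / ∂ s_k ∂ s_ℓ` at `s`. -/
def d2 {d : ℕ} (m : (Fin d → ℝ) → ℝ) (k l : Fin d) (s : Fin d → ℝ) : ℝ :=
  fderiv ℝ (fun x => fderiv ℝ m x (Pi.single l 1)) s (Pi.single k 1)

/-- The function `h_J(s)` from the paper. -/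
def hJfun {d : ℕ} (m : (Fin d → ℝ) → ℝ) (J : Finset (Fin d)) (lam : Fin d → ℝ)
    (s : Fin d → ℝ) : ℝ :=
  if J = Finset.univ then
    ∑ k, ∑ l, (1 / 2 : ℝ) * ((lam k + 1) * (if k = l then 1 else 0) + 1) * d2 m k l s
  else
    ∑ k ∈ Jᶜ, ∑ l ∈ Jᶜ, (1 / 2 : ℝ) * ((if k = l then s k else 0) - s k * s l) * d2 m k l s

/-- The function `ψ_J(s)` from the paper. -/
def psiJ {d : ℕ} (J : Finset (Fin d)) (s : Fin d → ℝ) : ℝ :=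
  ((4 * π) ^ ((d : ℝ) - J.card) * (1 - ∑ i, s i) * ∏ i ∈ Jᶜ, s i) ^ (-(1 : ℝ) / 2)

/-- The product `∏_{i ∈ J} Γ(2λ_i+1) / (2^{2λ_i+1} Γ(λ_i+1)²)`. -/
def gamProd {d : ℕ} (J : Finset (Fin d)) (lam : Fin d → ℝ) : ℝ :=
  ∏ i ∈ J, Gamma (2 * lam i + 1) / ((2 : ℝ) ^ (2 * lam i + 1) * Gamma (lam i + 1) ^ 2)

/-- The local linear smoother with Dirichlet kernel. -/
def mLL {d n : ℕ} (b : ℝ) (X : Fin n → Fin d → ℝ) (Y : Fin n → ℝ) (s : Fin d → ℝ) : ℝ :=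
  let 𝒳 : Matrix (Fin n) (Fin (d + 1)) ℝ :=
    Matrix.of fun i => Fin.cases 1 (fun k => X i k - s k)
  let W : Matrix (Fin n) (Fin n) ℝ := Matrix.diagonal fun i => kappa s b (X i)
  ((𝒳ᵀ * W * 𝒳)⁻¹ *ᵥ (𝒳ᵀ *ᵥ (W *ᵥ Y))) 0

/-- The Nadaraya–Watson estimator with Dirichlet kernel. -/
def mNW {d n : ℕ} (b : ℝ) (X : Fin n → Fin d → ℝ) (Y : Fin n → ℝ) (s : Fin d → ℝ) : ℝ :=
  (∑ i, Y i * kappa s b (X i)) / ∑ j, kappa s b (X j)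

/-- Central second moment `C_b(s; k, ℓ)` of the Dirichlet kernel. -/
def CbM {d : ℕ} (b : ℝ) (s : Fin d → ℝ) (k l : Fin d) : ℝ :=
  ∫ x in Sd d, (x k - s k) * (x l - s l) * kappa s b x

end

/-!
Induction on `d`, slicing the simplex along its first coordinate: for `t ∈ (0, 1)` the slice
`{y | (t, y) ∈ S_{d+1}}` is `(1 - t) • S_d`, and under `y = (1 - t) • z` the Dirichlet weight
factors as `t ^ (u₀ - 1) (1 - t) ^ (u₁ + … + u_d + v - 1)` times the `d`-dimensional weight in `z`.
The integral thus splits into a Beta integral in `t` times the `d`-dimensional Dirichlet integral.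
Lower Lebesgue integrals are used throughout, so no integrability has to be checked.
-/

open Set
open scoped ENNReal

theorem lintegral_comp_smul_of_pos {E : Type*} [NormedAddCommGroup E] [NormedSpace ℝ E]
    [MeasurableSpace E] [BorelSpace E] [FiniteDimensional ℝ E] (μ : Measure E)
    [μ.IsAddHaarMeasure] (f : E → ℝ≥0∞) {r : ℝ} (hr : 0 < r) :
    ∫⁻ x, f x ∂μ = ENNReal.ofReal (r ^ Module.finrank ℝ E) * ∫⁻ x, f (r • x) ∂μ := by
  have hmap : ∫⁻ x, f (r • x) ∂μ = ∫⁻ x, f x ∂(μ.map (r • ·)) :=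
    (lintegral_map_equiv f (MeasurableEquiv.smul₀ r hr.ne')).symm
  rw [hmap, Measure.map_addHaar_smul μ hr.ne', lintegral_smul_measure, smul_eq_mul, ← mul_assoc,
    abs_of_pos (by positivity), ← ENNReal.ofReal_mul (by positivity),
    mul_inv_cancel₀ (by positivity), ENNReal.ofReal_one, one_mul]

theorem lintegral_eq_lintegral_lintegral_cons {n : ℕ} (F : (Fin (n + 1) → ℝ) → ℝ≥0∞)
    (hF : Measurable F) :
    ∫⁻ x, F x = ∫⁻ t, ∫⁻ y, F (Fin.cons t y) := by
  have hmp := (volume_preserving_piFinSuccAbove (fun _ : Fin (n + 1) => ℝ) 0).symm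
  rw [← hmp.lintegral_comp hF, Measure.volume_eq_prod,
    lintegral_prod (fun p => F ((MeasurableEquiv.piFinSuccAbove (fun _ => ℝ) 0).symm p))
      (hF.comp (MeasurableEquiv.measurable _)).aemeasurable]
  simp [MeasurableEquiv.piFinSuccAbove_symm_apply, Fin.consEquiv]

theorem lintegral_Ioo_rpow_mul_one_sub_rpow {a b : ℝ} (ha : 0 < a) (hb : 0 < b) :
    ∫⁻ x in Set.Ioo 0 1, ENNReal.ofReal (x ^ (a - 1) * (1 - x) ^ (b - 1)) =
      ENNReal.ofReal (beta a b) := by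
  have h := lintegral_betaPDF_eq_one ha hb
  rw [lintegral_betaPDF] at h
  simp_rw [mul_assoc, ENNReal.ofReal_mul (one_div_pos.2 (beta_pos ha hb)).le] at h
  rw [lintegral_const_mul' _ _ ENNReal.ofReal_ne_top, mul_comm] at h
  rw [ENNReal.eq_inv_of_mul_eq_one_left h,
    ← ENNReal.ofReal_inv_of_pos (one_div_pos.2 (beta_pos ha hb)), one_div, inv_inv]

theorem mem_Sd_iff {d : ℕ} {x : Fin d → ℝ} : x ∈ Sd d ↔ (∀ i, 0 ≤ x i) ∧ ∑ i, x i ≤ 1 := by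
  refine ⟨fun h => ⟨fun i => (h.1 i).1, h.2⟩, fun h => ⟨fun i => ⟨h.1 i, ?_⟩, h.2⟩⟩
  exact (Finset.single_le_sum (fun j _ => h.1 j) (Finset.mem_univ i)).trans h.2

theorem measurableSet_Sd (d : ℕ) : MeasurableSet (Sd d) := by
  simp only [Sd, ofPred_and, ofPred_forall]
  exact (MeasurableSet.iInter fun i =>
    (measurableSet_le measurable_const (measurable_pi_apply i)).inter
      (measurableSet_le (measurable_pi_apply i) measurable_const)).inter
    (measurableSet_le (by fun_prop) measurable_const)

theorem cons_smul_mem_Sd_iff {d : ℕ} {t : ℝ} (ht : t ∈ Set.Ioo 0 1) (z : Fin d → ℝ) :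
    (Fin.cons t ((1 - t) • z) : Fin (d + 1) → ℝ) ∈ Sd (d + 1) ↔ z ∈ Sd d := by
  have hc : 0 < 1 - t := sub_pos.2 ht.2
  simp only [mem_Sd_iff, Fin.forall_fin_succ, Fin.cons_zero, Fin.cons_succ, Fin.sum_cons,
    Pi.smul_apply, smul_eq_mul, ← Finset.mul_sum, ht.1.le, true_and,
    mul_nonneg_iff_of_pos_left hc]
  refine and_congr_right fun _ => ?_
  constructor <;> intro h <;> nlinarith

theorem lintegral_Sd_succ {d : ℕ} (F : (Fin (d + 1) → ℝ) → ℝ≥0∞) (hF : Measurable F) :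
    ∫⁻ x in Sd (d + 1), F x =
      ∫⁻ t in Set.Ioo 0 1, ENNReal.ofReal ((1 - t) ^ d) *
        ∫⁻ z in Sd d, F (Fin.cons t ((1 - t) • z)) := by
  rw [← lintegral_indicator (measurableSet_Sd _),
    lintegral_eq_lintegral_lintegral_cons _ (hF.indicator (measurableSet_Sd _)),
    ← lintegral_indicator measurableSet_Ioo]
  -- the slices at `t = 0` and `t = 1` escape the formula but form a null set
  have hbdry : ∀ᵐ t : ℝ, t ∉ ({0, 1} : Set ℝ) := (toFinite _).countable.ae_notMem _
  refine lintegral_congr_ae (hbdry.mono fun t ht => ?_)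
  by_cases htI : t ∈ Set.Ioo 0 1
  · have hc : 0 < 1 - t := sub_pos.2 htI.2
    dsimp only
    rw [indicator_of_mem htI, lintegral_comp_smul_of_pos volume _ hc, Module.finrank_fin_fun,
      ← lintegral_indicator (measurableSet_Sd d)]
    congr 2 with z
    by_cases hz : z ∈ Sd d
    · simp [indicator_of_mem hz, indicator_of_mem ((cons_smul_mem_Sd_iff htI z).2 hz)]
    · simp [indicator_of_notMem hz, indicator_of_notMem (mt (cons_smul_mem_Sd_iff htI z).1 hz)]
  · rw [indicator_of_notMem htI]
    suffices ∀ y, (Sd (d + 1)).indicator F (Fin.cons t y) = 0 by simp [this]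
    refine fun y => indicator_of_notMem (fun hy => ?_) _
    have h0 := (hy.1 0).1
    have h1 := (hy.1 0).2
    simp only [Fin.cons_zero] at h0 h1
    simp only [mem_insert_iff, mem_singleton_iff, not_or] at ht
    exact htI ⟨lt_of_le_of_ne h0 (Ne.symm ht.1), lt_of_le_of_ne h1 ht.2⟩

noncomputable def dirichletWeight {d : ℕ} (u : Fin d → ℝ) (v : ℝ) (x : Fin d → ℝ) : ℝ :=
  (1 - ∑ i, x i) ^ (v - 1) * ∏ i, x i ^ (u i - 1)

theorem measurable_dirichletWeight {d : ℕ} (u : Fin d → ℝ) (v : ℝ) :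
    Measurable (dirichletWeight u v) := by
  unfold dirichletWeight
  fun_prop

theorem dirichletWeight_nonneg {d : ℕ} (u : Fin d → ℝ) (v : ℝ) {x : Fin d → ℝ}
    (hx : x ∈ Sd d) : 0 ≤ dirichletWeight u v x :=
  mul_nonneg (rpow_nonneg (sub_nonneg.2 hx.2) _)
    (Finset.prod_nonneg fun i _ => rpow_nonneg (hx.1 i).1 _)

theorem dirichletWeight_cons_smul {d : ℕ} (u : Fin (d + 1) → ℝ) (v : ℝ) {t : ℝ} (ht : t < 1)
    {z : Fin d → ℝ} (hz : z ∈ Sd d) :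
    (1 - t) ^ d * dirichletWeight u v (Fin.cons t ((1 - t) • z)) =
      t ^ (u 0 - 1) * (1 - t) ^ ((∑ i, Fin.tail u i) + v - 1) *
        dirichletWeight (Fin.tail u) v z := by
  set c := 1 - t
  have hc : 0 < c := sub_pos.2 ht
  obtain ⟨hz0, hz1⟩ := mem_Sd_iff.1 hz
  have hsum : 1 - ∑ i, (Fin.cons t (c • z) : Fin (d + 1) → ℝ) i = c * (1 - ∑ i, z i) := by
    simp only [Fin.sum_cons, Pi.smul_apply, smul_eq_mul, ← Finset.mul_sum, c]
    ring
  have hprod : ∏ i : Fin d, (c * z i) ^ (u i.succ - 1) =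
      c ^ (∑ i, Fin.tail u i - d) * ∏ i, z i ^ (Fin.tail u i - 1) := by
    simp_rw [mul_rpow hc.le (hz0 _), Finset.prod_mul_distrib, ← rpow_sum_of_pos hc,
      Finset.sum_sub_distrib]
    simp [Fin.tail]
  unfold dirichletWeight
  rw [Fin.prod_univ_succ, hsum]
  simp only [Fin.cons_zero, Fin.cons_succ, Pi.smul_apply, smul_eq_mul]
  rw [hprod, mul_rpow hc.le (sub_nonneg.2 hz1),
    show (∑ i, Fin.tail u i) + v - 1 = d + (v - 1) + (∑ i, Fin.tail u i - d) by ring,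
    rpow_add hc, rpow_add hc, rpow_natCast]
  ring

theorem lintegral_Sd_dirichletWeight {d : ℕ} (u : Fin d → ℝ) (v : ℝ) (hu : ∀ i, 0 < u i)
    (hv : 0 < v) :
    ∫⁻ x in Sd d, ENNReal.ofReal (dirichletWeight u v x) =
      ENNReal.ofReal (Gamma v * (∏ i, Gamma (u i)) / Gamma ((∑ i, u i) + v)) := by
  induction d with
  | zero => simp [dirichletWeight, Sd, volume_pi, (Gamma_pos_of_pos hv).ne']
  | succ d ih =>
    have hu' : ∀ i, 0 < Fin.tail u i := fun i => hu i.succ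
    have hs' : 0 < (∑ i, Fin.tail u i) + v :=
      add_pos_of_nonneg_of_pos (Finset.sum_nonneg fun i _ => (hu' i).le) hv
    have hslice : ∀ t ∈ Set.Ioo (0 : ℝ) 1,
        ENNReal.ofReal ((1 - t) ^ d) *
          ∫⁻ z in Sd d, ENNReal.ofReal (dirichletWeight u v (Fin.cons t ((1 - t) • z))) =
        ENNReal.ofReal (t ^ (u 0 - 1) * (1 - t) ^ ((∑ i, Fin.tail u i) + v - 1)) *
          ENNReal.ofReal (Gamma v * (∏ i, Gamma (Fin.tail u i)) /
            Gamma ((∑ i, Fin.tail u i) + v)) := by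
      intro t ht
      have hc : 0 ≤ 1 - t := sub_nonneg.2 ht.2.le
      rw [← ih _ hu', ← lintegral_const_mul' _ _ ENNReal.ofReal_ne_top,
        ← lintegral_const_mul' _ _ ENNReal.ofReal_ne_top]
      refine setLIntegral_congr_fun (measurableSet_Sd d) fun z hz => ?_
      rw [← ENNReal.ofReal_mul (pow_nonneg hc _),
        ← ENNReal.ofReal_mul (mul_nonneg (rpow_nonneg ht.1.le _) (rpow_nonneg hc _)),
        dirichletWeight_cons_smul u v ht.2 hz]
    rw [lintegral_Sd_succ _ (measurable_dirichletWeight u v).ennreal_ofReal,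
      setLIntegral_congr_fun measurableSet_Ioo hslice,
      lintegral_mul_const' _ _ ENNReal.ofReal_ne_top,
      lintegral_Ioo_rpow_mul_one_sub_rpow (hu 0) hs',
      ← ENNReal.ofReal_mul (beta_pos (hu 0) hs').le]
    congr 1
    rw [beta, Fin.prod_univ_succ, Fin.sum_univ_succ, add_assoc]
    simp only [Fin.tail] at hs' ⊢
    field_simp [(Gamma_pos_of_pos hs').ne']

theorem gamma_mul_prod_gamma_div_pos {d : ℕ} (u : Fin d → ℝ) (v : ℝ) (hu : ∀ i, 0 < u i)
    (hv : 0 < v) : 0 < Gamma v * (∏ i, Gamma (u i)) / Gamma ((∑ i, u i) + v) :=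
  div_pos (mul_pos (Gamma_pos_of_pos hv) (Finset.prod_pos fun i _ => Gamma_pos_of_pos (hu i)))
    (Gamma_pos_of_pos (add_pos_of_nonneg_of_pos (Finset.sum_nonneg fun i _ => (hu i).le) hv))

theorem integral_Sd_dirichletWeight {d : ℕ} (u : Fin d → ℝ) (v : ℝ) (hu : ∀ i, 0 < u i)
    (hv : 0 < v) :
    ∫ x in Sd d, dirichletWeight u v x =
      Gamma v * (∏ i, Gamma (u i)) / Gamma ((∑ i, u i) + v) := by
  rw [integral_eq_lintegral_of_nonneg_ae
      (ae_restrict_of_forall_mem (measurableSet_Sd d) fun x hx => dirichletWeight_nonneg u v hx)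
      (measurable_dirichletWeight u v).aestronglyMeasurable,
    lintegral_Sd_dirichletWeight u v hu hv,
    ENNReal.toReal_ofReal (gamma_mul_prod_gamma_div_pos u v hu hv).le]

/-- the Dirichlet integral formula, and the fact that the
Dirichlet density integrates to one over the simplex. -/
theorem dirichlet_integral (d : ℕ) (u : Fin d → ℝ) (v : ℝ)
    (hu : ∀ i, 0 < u i) (hv : 0 < v) :
    (∫ x in Sd d, (1 - ∑ i, x i) ^ (v - 1) * ∏ i, (x i) ^ (u i - 1)) =
      Gamma v * (∏ i, Gamma (u i)) / Gamma ((∑ i, u i) + v) ∧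
    (∫ x in Sd d, Kdir u v x) = 1 := by
  have h := integral_Sd_dirichletWeight u v hu hv
  refine ⟨h, ?_⟩
  have hK : ∀ x, Kdir u v x =
      Gamma ((∑ i, u i) + v) / (Gamma v * ∏ i, Gamma (u i)) * dirichletWeight u v x :=
    fun x => mul_assoc _ _ _
  simp_rw [hK, integral_const_mul, h]
  rw [← inv_div]
  exact inv_mul_cancel₀ (gamma_mul_prod_gamma_div_pos u v hu hv).ne'
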